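/- Let σ be a permutation of S_k with cycle type μ = (μ_1, …, μ_ℓ), and let Moeb(σ) = ∏_{i=1}^{ℓ} Cat(μ_i − 1). Then for any transposition τ in S_k, Moeb(τσ) ≤ 6·k^(3/2)·Moeb(σ). -/

import Mathlib

/-- `Moeb(σ) = ∏_i Cat(μ_i − 1)` over the cycle type `μ` of `σ`
(fixed points contribute `Cat(0) = 1`, so only nontrivial cycles matter). -/
def moeb {k : ℕ} (σ : Equiv.Perm (Fin k)) : ℕ :=
  (σ.cycleType.map fun m => catalan (m - 1)).prod

/-!
Multiplying `σ` by the transposition `(x y)` merges the cycles of `x` and `y` when they differ and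
splits their common cycle in two otherwise; all other cycles are untouched. Counting fixed points
as cycles of length one, a merge of cycles of lengths `p` and `q` multiplies `Moeb` by
`Cat(p + q - 1) / (Cat(p - 1) Cat(q - 1))`, and a split divides it by such a factor, which is
at least `1` since `Cat(a) Cat(b)` is one term of the convolution giving `Cat(a + b + 1)`. The
bounds `16ⁿ / (4n) ≤ C(2n, n)² ≤ 16ⁿ / (3n + 1)` show that the merge factor is at most
`2 (p + q)^(3/2)`.
-/

open Finset

namespace Nat

theorem three_mul_add_one_mul_centralBinom_sq_le (n : ℕ) :
    (3 * n + 1) * centralBinom n ^ 2 ≤ 16 ^ n := by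
  induction n with
  | zero => simp
  | succ n ih =>
    refine Nat.le_of_mul_le_mul_left ?_ (by positivity : 0 < (n + 1) ^ 2)
    calc (n + 1) ^ 2 * ((3 * (n + 1) + 1) * centralBinom (n + 1) ^ 2)
        = (3 * n + 4) * ((n + 1) * centralBinom (n + 1)) ^ 2 := by ring
      _ = (3 * n + 4) * (4 * (2 * n + 1) ^ 2) * centralBinom n ^ 2 := by
        rw [succ_mul_centralBinom_succ]; ring
      _ ≤ 16 * (n + 1) ^ 2 * (3 * n + 1) * centralBinom n ^ 2 :=
        Nat.mul_le_mul_right _ (by nlinarith)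
      _ ≤ 16 * (n + 1) ^ 2 * 16 ^ n := by rw [mul_assoc _ (3 * n + 1)]; gcongr
      _ = (n + 1) ^ 2 * 16 ^ (n + 1) := by ring

theorem sixteen_pow_le_mul_centralBinom_sq {n : ℕ} (hn : 0 < n) :
    16 ^ n ≤ 4 * n * centralBinom n ^ 2 := by
  induction n with
  | zero => omega
  | succ n ih =>
    rcases n.eq_zero_or_pos with rfl | hn
    · simp [centralBinom, choose]
    refine Nat.le_of_mul_le_mul_left ?_ (by positivity : 0 < (n + 1) ^ 2)
    calc (n + 1) ^ 2 * 16 ^ (n + 1) = 16 * (n + 1) ^ 2 * 16 ^ n := by ring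
      _ ≤ 16 * (n + 1) ^ 2 * (4 * n * centralBinom n ^ 2) := by gcongr; exact ih hn
      _ = 4 * (n + 1) * (16 * n * (n + 1)) * centralBinom n ^ 2 := by ring
      _ ≤ 4 * (n + 1) * (4 * (2 * n + 1) ^ 2) * centralBinom n ^ 2 :=
        Nat.mul_le_mul_right _ (Nat.mul_le_mul_left _ (by nlinarith))
      _ = (n + 1) ^ 2 * (4 * (n + 1) * centralBinom (n + 1) ^ 2) := by
        rw [show (n + 1) ^ 2 * (4 * (n + 1) * centralBinom (n + 1) ^ 2)
          = 4 * (n + 1) * ((n + 1) * centralBinom (n + 1)) ^ 2 by ring, succ_mul_centralBinom_succ]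
        ring

end Nat

section Catalan

open Nat

theorem catalan_pos (n : ℕ) : 0 < catalan n :=
  Nat.pos_of_mul_pos_left ((succ_mul_catalan_eq_centralBinom n).symm ▸ centralBinom_pos n)

theorem catalan_mul_catalan_le (a b : ℕ) : catalan a * catalan b ≤ catalan (a + b + 1) := by
  rw [catalan_succ]
  simpa using single_le_sum (f := fun i : Fin (a + b).succ => catalan i * catalan (a + b - i))
    (fun _ _ => Nat.zero_le _) (mem_univ ⟨a, by omega⟩)

theorem catalan_succ_le_four_mul (n : ℕ) : catalan (n + 1) ≤ 4 * catalan n := by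
  refine Nat.le_of_mul_le_mul_left ?_ (by positivity : 0 < (n + 1) * (n + 2))
  calc (n + 1) * (n + 2) * catalan (n + 1) = 2 * (2 * n + 1) * ((n + 1) * catalan n) := by
        rw [mul_assoc, succ_mul_catalan_eq_centralBinom (n + 1), succ_mul_centralBinom_succ,
          succ_mul_catalan_eq_centralBinom]
    _ ≤ (n + 1) * (n + 2) * (4 * catalan n) := by nlinarith [catalan_pos n]

theorem catalan_add_add_one_sq_le (a b : ℕ) :
    catalan (a + b + 1) ^ 2 ≤ 4 * (a + b + 2) ^ 3 * (catalan a * catalan b) ^ 2 := by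
  have hzero (b : ℕ) : catalan (b + 1) ^ 2 ≤ 4 * (b + 2) ^ 3 * catalan b ^ 2 :=
    calc catalan (b + 1) ^ 2 ≤ (4 * catalan b) ^ 2 := by gcongr; exact catalan_succ_le_four_mul b
      _ ≤ 4 * (b + 2) ^ 3 * catalan b ^ 2 := by
        rw [mul_pow]; gcongr; nlinarith [Nat.pow_le_pow_left (show 2 ≤ b + 2 by omega) 3]
  rcases a.eq_zero_or_pos with rfl | ha
  · simpa using hzero b
  rcases b.eq_zero_or_pos with rfl | hb
  · simpa using hzero a
  have hab : 4 * (a * b) ≤ (a + b + 2) ^ 2 := by zify; nlinarith [sq_nonneg ((a : ℤ) - b)]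
  have hab' : 4 * ((a + 1) * (b + 1)) ≤ (a + b + 2) ^ 2 := by
    zify; nlinarith [sq_nonneg ((a : ℤ) - b)]
  refine Nat.le_of_mul_le_mul_left ?_ (by positivity : 0 < (3 * (a + b + 1) + 1) * (a + b + 2) ^ 2)
  calc (3 * (a + b + 1) + 1) * (a + b + 2) ^ 2 * catalan (a + b + 1) ^ 2
      = (3 * (a + b + 1) + 1) * centralBinom (a + b + 1) ^ 2 := by
        rw [← succ_mul_catalan_eq_centralBinom]; ring
    _ ≤ 16 * 16 ^ a * 16 ^ b := by
        rw [mul_assoc, ← pow_add, ← _root_.pow_succ']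
        exact three_mul_add_one_mul_centralBinom_sq_le _
    _ ≤ 16 * (4 * a * centralBinom a ^ 2) * (4 * b * centralBinom b ^ 2) := by
        gcongr
        exacts [sixteen_pow_le_mul_centralBinom_sq ha, sixteen_pow_le_mul_centralBinom_sq hb]
    _ = 4 * (4 * (a * b)) * (4 * ((a + 1) * (b + 1))) ^ 2 * (catalan a * catalan b) ^ 2 := by
        rw [← succ_mul_catalan_eq_centralBinom a, ← succ_mul_catalan_eq_centralBinom b]; ring
    _ ≤ 4 * (a + b + 2) ^ 2 * ((a + b + 2) ^ 2) ^ 2 * (catalan a * catalan b) ^ 2 := by gcongr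
    _ = (a + b + 2) * (a + b + 2) ^ 2 * (4 * (a + b + 2) ^ 3 * (catalan a * catalan b) ^ 2) := by
        ring
    _ ≤ (3 * (a + b + 1) + 1) * (a + b + 2) ^ 2 *
          (4 * (a + b + 2) ^ 3 * (catalan a * catalan b) ^ 2) :=
        Nat.mul_le_mul_right _ (Nat.mul_le_mul_right _ (by omega))

theorem catalan_add_add_one_le {a b k : ℕ} (hk : a + b + 2 ≤ k) :
    (catalan (a + b + 1) : ℝ) ≤ 2 * (k : ℝ) ^ ((3 : ℝ) / 2) * (catalan a * catalan b) := by
  have hsq : (2 * (k : ℝ) ^ ((3 : ℝ) / 2)) ^ 2 = 4 * (k : ℝ) ^ 3 := by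
    rw [mul_pow, ← Real.rpow_natCast ((k : ℝ) ^ ((3 : ℝ) / 2)),
      ← Real.rpow_mul (Nat.cast_nonneg k)]
    norm_num
  refine le_of_pow_le_pow_left₀ two_ne_zero (by positivity) ?_
  calc (catalan (a + b + 1) : ℝ) ^ 2
      ≤ 4 * ((a + b + 2 : ℕ) : ℝ) ^ 3 * (catalan a * catalan b) ^ 2 := by
        exact_mod_cast catalan_add_add_one_sq_le a b
    _ ≤ 4 * (k : ℝ) ^ 3 * (catalan a * catalan b) ^ 2 := by gcongr
    _ = (2 * (k : ℝ) ^ ((3 : ℝ) / 2) * (catalan a * catalan b)) ^ 2 := by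
        rw [mul_pow _ ((catalan a : ℝ) * _), hsq]

end Catalan

namespace Equiv.Perm

section Finite

variable {α : Type*} [Finite α] {f : Perm α} {x y z : α}

theorem SameCycle.exists_least_pos_pow_eq (h : f.SameCycle x y) :
    ∃ j, 0 < j ∧ (f ^ j) x = y ∧ ∀ i, 0 < i → i < j → (f ^ i) x ≠ y := by
  classical
  have hex : ∃ j, 0 < j ∧ (f ^ j) x = y := h.exists_pow_eq''.imp fun _ hj => ⟨hj.1, hj.2.2⟩
  exact ⟨Nat.find hex, (Nat.find_spec hex).1, (Nat.find_spec hex).2,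
    fun i hi hij hiy => Nat.find_min hex hij ⟨hi, hiy⟩⟩

theorem SameCycle.exists_pow_lt_eq {j : ℕ} (h : f.SameCycle x z) (hj : 0 < j)
    (hx : (f ^ j) x = x) : ∃ i < j, (f ^ i) x = z := by
  obtain ⟨n, rfl⟩ := h.exists_nat_pow_eq
  refine ⟨n % j, n.mod_lt hj, ?_⟩
  conv_rhs => rw [← Nat.mod_add_div n j, pow_add, pow_mul, mul_apply,
    pow_apply_eq_self_of_apply_eq_self hx]

theorem sameCycle_iff_of_eqOn {f' : Perm α} (h : ∀ z, f.SameCycle y z → f' z = f z) :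
    f'.SameCycle y z ↔ f.SameCycle y z := by
  have hpow (n : ℕ) : (f' ^ n) y = (f ^ n) y := by
    induction n with
    | zero => rfl
    | succ n ih =>
      rw [pow_succ', mul_apply, ih, h _ (sameCycle_pow_right.2 .rfl), ← mul_apply, ← pow_succ']
  constructor <;> intro hz <;> obtain ⟨n, rfl⟩ := hz.exists_nat_pow_eq
  · exact hpow n ▸ sameCycle_pow_right.2 .rfl
  · exact hpow n ▸ sameCycle_pow_right.2 .rfl

end Finite

section Swap

variable {α : Type*} [DecidableEq α] {σ : Perm α} {x y : α} {j : ℕ}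

theorem swap_mul_pow_apply_of_lt
    (h : ∀ i, 0 < i → i < j → (σ ^ i) x ≠ x ∧ (σ ^ i) x ≠ y) {i : ℕ} (hi : i < j) :
    ((swap x y * σ) ^ i) x = (σ ^ i) x := by
  induction i with
  | zero => rfl
  | succ i ih =>
    obtain ⟨hx, hy⟩ := h (i + 1) i.succ_pos hi
    rw [pow_succ', mul_apply, ih (by omega), mul_apply, ← mul_apply σ, ← pow_succ',
      swap_apply_of_ne_of_ne hx hy]

theorem swap_mul_pow_apply (h : ∀ i, 0 < i → i < j → (σ ^ i) x ≠ x ∧ (σ ^ i) x ≠ y)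
    (hj : 0 < j) : ((swap x y * σ) ^ j) x = swap x y ((σ ^ j) x) := by
  obtain ⟨i, rfl⟩ := Nat.exists_eq_add_one.2 hj
  rw [pow_succ', mul_apply, swap_mul_pow_apply_of_lt h i.lt_succ_self, mul_apply,
    ← mul_apply σ, ← pow_succ']

variable [Finite α]

theorem sameCycle_swap_mul_of_not_sameCycle (h : ¬σ.SameCycle x y) :
    (swap x y * σ).SameCycle x y ∧
      ∀ z, σ.SameCycle x z → (swap x y * σ).SameCycle x z := by
  obtain ⟨j, hj, hjx, hmin⟩ := (SameCycle.refl σ x).exists_least_pos_pow_eq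
  have havoid : ∀ i, 0 < i → i < j → (σ ^ i) x ≠ x ∧ (σ ^ i) x ≠ y :=
    fun i hi hij => ⟨hmin i hi hij, fun hy => h (hy ▸ sameCycle_pow_right.2 .rfl)⟩
  refine ⟨⟨j, ?_⟩, fun z hz => ?_⟩
  · rw [zpow_natCast, swap_mul_pow_apply havoid hj, hjx, swap_apply_left]
  · obtain ⟨i, hi, rfl⟩ := hz.exists_pow_lt_eq hj hjx
    exact swap_mul_pow_apply_of_lt havoid hi ▸ sameCycle_pow_right.2 .rfl

theorem sameCycle_swap_mul_iff (h : ¬σ.SameCycle x y) (z : α) :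
    (swap x y * σ).SameCycle x z ↔ σ.SameCycle x z ∨ σ.SameCycle y z := by
  constructor
  · have hmaps : ∀ w, σ.SameCycle x w ∨ σ.SameCycle y w →
        σ.SameCycle x ((swap x y * σ) w) ∨ σ.SameCycle y ((swap x y * σ) w) := by
      intro w hw
      rw [mul_apply, swap_apply_def]
      split_ifs
      · exact .inr .rfl
      · exact .inl .rfl
      · simpa only [sameCycle_apply_right] using hw
    intro hz
    obtain ⟨n, rfl⟩ := hz.exists_nat_pow_eq
    induction n with
    | zero => exact .inl .rfl
    | succ n ih => rw [pow_succ', mul_apply]; exact hmaps _ (ih (sameCycle_pow_right.2 .rfl))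
  · rintro (hz | hz)
    · exact (sameCycle_swap_mul_of_not_sameCycle h).2 z hz
    · have hyx : ¬σ.SameCycle y x := fun h' => h h'.symm
      rw [swap_comm]
      exact (sameCycle_swap_mul_of_not_sameCycle hyx).1.symm.trans
        ((sameCycle_swap_mul_of_not_sameCycle hyx).2 z hz)

theorem SameCycle.not_sameCycle_swap_mul (h : σ.SameCycle x y) (hxy : x ≠ y) :
    ¬(swap x y * σ).SameCycle x y := by
  obtain ⟨j, hj, hjy, hmin⟩ := h.exists_least_pos_pow_eq
  have havoid : ∀ i, 0 < i → i < j → (σ ^ i) x ≠ x ∧ (σ ^ i) x ≠ y := by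
    refine fun i hi hij => ⟨fun hx => hmin (j - i) (by omega) (by omega) ?_, hmin i hi hij⟩
    rw [← hjy, ← Nat.sub_add_cancel hij.le, pow_add, mul_apply, hx, Nat.sub_add_cancel hij.le]
  intro hs
  obtain ⟨i, hi, hiy⟩ := hs.exists_pow_lt_eq hj
    (by rw [swap_mul_pow_apply havoid hj, hjy, swap_apply_right])
  rw [swap_mul_pow_apply_of_lt havoid hi] at hiy
  rcases i.eq_zero_or_pos with rfl | hi0
  · exact hxy hiy
  · exact (havoid i hi0 hi).2 hiy

end Swap

section CatalanProd

variable {α : Type*} [Fintype α] [DecidableEq α]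

def catalanProd (σ : Perm α) : ℕ :=
  (σ.cycleType.map fun m => catalan (m - 1)).prod

theorem catalanProd_mul {f g : Perm α} (h : f.Disjoint g) :
    catalanProd (f * g) = catalanProd f * catalanProd g := by
  simp only [catalanProd, h.cycleType_mul, Multiset.map_add, Multiset.prod_add]

theorem mul_inv_cycleOf_apply (σ : Perm α) (x z : α) :
    (σ * (σ.cycleOf x)⁻¹) z = if σ.SameCycle x z then z else σ z := by
  rw [mul_apply, cycleOf_inv]
  by_cases h : σ.SameCycle x z <;> simp [cycleOf_apply, h]

theorem catalanProd_eq_catalanProd_mul_inv_cycleOf_mul (σ : Perm α) (x : α) :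
    catalanProd σ =
      catalanProd (σ * (σ.cycleOf x)⁻¹) * catalan (#{z | σ.SameCycle x z} - 1) := by
  by_cases hx : σ x = x
  · have : #{z | σ.SameCycle x z} = 1 := by
      refine card_eq_one.2 ⟨x, ?_⟩
      ext z
      simpa using ⟨fun h => (h.eq_of_left hx).symm, fun h => h ▸ .rfl⟩
    simp [(cycleOf_eq_one_iff σ).2 hx, this]
  · have hsupp : (σ.cycleOf x).support = ({z | σ.SameCycle x z} : Finset α) := by
      ext z; simp [mem_support_cycleOf_iff' hx]
    have hdisj := disjoint_mul_inv_of_mem_cycleFactorsFinset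
      (cycleOf_mem_cycleFactorsFinset_iff.2 (mem_support.2 hx))
    conv_lhs => rw [← inv_mul_cancel_right σ (σ.cycleOf x)]
    rw [catalanProd_mul hdisj]
    congr 1
    simp [catalanProd, (isCycle_cycleOf σ hx).cycleType, hsupp]

variable {σ : Perm α} {x y : α}

theorem card_sameCycle_pos (σ : Perm α) (x : α) : 0 < #{z | σ.SameCycle x z} :=
  card_pos.2 ⟨x, mem_filter.2 ⟨mem_univ x, .rfl⟩⟩

theorem card_sameCycle_swap_mul (h : ¬σ.SameCycle x y) :
    #{z | (swap x y * σ).SameCycle x z} = #{z | σ.SameCycle x z} + #{z | σ.SameCycle y z} := by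
  rw [filter_congr fun z _ => sameCycle_swap_mul_iff h z, filter_or, card_union_of_disjoint]
  exact disjoint_filter.2 fun z _ hxz hyz => h (hxz.trans hyz.symm)

theorem catalanProd_swap_mul_mul_of_not_sameCycle (h : ¬σ.SameCycle x y) :
    catalanProd (swap x y * σ) *
        (catalan (#{z | σ.SameCycle x z} - 1) * catalan (#{z | σ.SameCycle y z} - 1)) =
      catalanProd σ * catalan (#{z | σ.SameCycle x z} + #{z | σ.SameCycle y z} - 1) := by
  have hσ₁ (z : α) : (σ * (σ.cycleOf x)⁻¹).SameCycle y z ↔ σ.SameCycle y z :=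
    sameCycle_iff_of_eqOn fun w hw => by
      rw [mul_inv_cycleOf_apply, if_neg fun hxw => h (hxw.trans hw.symm)]
  have hg : (swap x y * σ) * ((swap x y * σ).cycleOf x)⁻¹ =
      (σ * (σ.cycleOf x)⁻¹) * ((σ * (σ.cycleOf x)⁻¹).cycleOf y)⁻¹ := by
    ext z
    simp only [mul_inv_cycleOf_apply, sameCycle_swap_mul_iff h, hσ₁]
    by_cases hx : σ.SameCycle x z
    · simp [hx]
    by_cases hy : σ.SameCycle y z
    · simp [hy]
    have hσx : σ z ≠ x := fun hzx => hx (sameCycle_apply_right.1 (hzx ▸ .rfl))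
    have hσy : σ z ≠ y := fun hzy => hy (sameCycle_apply_right.1 (hzy ▸ .rfl))
    simp [hx, hy, swap_apply_of_ne_of_ne hσx hσy]
  rw [catalanProd_eq_catalanProd_mul_inv_cycleOf_mul (swap x y * σ) x, hg,
    card_sameCycle_swap_mul h, catalanProd_eq_catalanProd_mul_inv_cycleOf_mul σ x,
    catalanProd_eq_catalanProd_mul_inv_cycleOf_mul (σ * (σ.cycleOf x)⁻¹) y,
    filter_congr fun z _ => hσ₁ z]
  ring

theorem catalanProd_swap_mul_le_of_sameCycle (h : σ.SameCycle x y) (hxy : x ≠ y) :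
    catalanProd (swap x y * σ) ≤ catalanProd σ := by
  have key := catalanProd_swap_mul_mul_of_not_sameCycle (h.not_sameCycle_swap_mul hxy)
  rw [swap_mul_self_mul] at key
  set p := #{z | (swap x y * σ).SameCycle x z}
  set q := #{z | (swap x y * σ).SameCycle y z}
  have hp : 0 < p := card_sameCycle_pos _ x
  have hq : 0 < q := card_sameCycle_pos _ y
  have hcat := catalan_mul_catalan_le (p - 1) (q - 1)
  rw [show p - 1 + (q - 1) + 1 = p + q - 1 by omega] at hcat
  refine Nat.le_of_mul_le_mul_right ?_ (catalan_pos (p + q - 1))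
  rw [← key]
  exact Nat.mul_le_mul_left _ hcat

theorem catalanProd_swap_mul_le_of_not_sameCycle (h : ¬σ.SameCycle x y) :
    (catalanProd (swap x y * σ) : ℝ) ≤
      2 * (Fintype.card α : ℝ) ^ ((3 : ℝ) / 2) * catalanProd σ := by
  have key := catalanProd_swap_mul_mul_of_not_sameCycle h
  set p := #{z | σ.SameCycle x z}
  set q := #{z | σ.SameCycle y z}
  have hp : 0 < p := card_sameCycle_pos σ x
  have hq : 0 < q := card_sameCycle_pos σ y
  have hpq : p + q ≤ Fintype.card α := card_sameCycle_swap_mul h ▸ card_le_univ _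
  have hcat := catalan_add_add_one_le (a := p - 1) (b := q - 1) (by omega : _ ≤ Fintype.card α)
  rw [show p - 1 + (q - 1) + 1 = p + q - 1 by omega] at hcat
  have hpos : (0 : ℝ) < catalan (p - 1) * catalan (q - 1) := by
    have := catalan_pos (p - 1); have := catalan_pos (q - 1); positivity
  refine le_of_mul_le_mul_right ?_ hpos
  calc (catalanProd (swap x y * σ) : ℝ) * (catalan (p - 1) * catalan (q - 1))
      = catalanProd σ * catalan (p + q - 1) := by exact_mod_cast key
    _ ≤ catalanProd σ * (2 * (Fintype.card α : ℝ) ^ ((3 : ℝ) / 2) *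
          (catalan (p - 1) * catalan (q - 1))) := by gcongr
    _ = 2 * (Fintype.card α : ℝ) ^ ((3 : ℝ) / 2) * catalanProd σ *
          (catalan (p - 1) * catalan (q - 1)) := by ring

theorem catalanProd_swap_mul_le (hxy : x ≠ y) :
    (catalanProd (swap x y * σ) : ℝ) ≤
      2 * (Fintype.card α : ℝ) ^ ((3 : ℝ) / 2) * catalanProd σ := by
  by_cases h : σ.SameCycle x y
  · have hcard : (1 : ℝ) ≤ (Fintype.card α : ℝ) ^ ((3 : ℝ) / 2) :=
      Real.one_le_rpow (by exact_mod_cast Fintype.card_pos_iff.2 ⟨x⟩) (by norm_num)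
    calc (catalanProd (swap x y * σ) : ℝ) ≤ catalanProd σ := by
          exact_mod_cast catalanProd_swap_mul_le_of_sameCycle h hxy
      _ ≤ 2 * (Fintype.card α : ℝ) ^ ((3 : ℝ) / 2) * catalanProd σ :=
          le_mul_of_one_le_left (Nat.cast_nonneg _) (by linarith)
  · exact catalanProd_swap_mul_le_of_not_sameCycle h

end CatalanProd

end Equiv.Perm

/-- For `σ ∈ S_k` and any transposition `τ ∈ S_k`,
`Moeb(τσ) ≤ 6·k^(3/2)·Moeb(σ)`. -/
theorem moeb_swap_mul_le {k : ℕ} (σ τ : Equiv.Perm (Fin k)) (hτ : τ.IsSwap) :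
    (moeb (τ * σ) : ℝ) ≤ 6 * (k : ℝ) ^ ((3 : ℝ) / 2) * moeb σ := by
  obtain ⟨x, y, hxy, rfl⟩ := hτ
  have h := Equiv.Perm.catalanProd_swap_mul_le (σ := σ) hxy
  rw [Fintype.card_fin] at h
  -- `moeb` unfolds to `Equiv.Perm.catalanProd` on `Fin k`
  exact h.trans (mul_le_mul_of_nonneg_right (by gcongr; norm_num) (Nat.cast_nonneg _))
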